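/- arXiv:2111.04600 — 2 statements merged into one kernel-verified Lean document; each statement's English description precedes it below -/
import Mathlib

section
/- Let α ∈ ℝ[t] be nonzero, let b ∈ ℍ[t] be vectorial, and let A ∈ ℍ[t] be nonzero and reduced with respect to i. Set c = α·b′ − α′·b, where ′ denotes the formal polynomial derivative. Then the following three conditions are equivalent: (i) c·(A i Ā) = (A i Ā)·c (vanishing cross product of the vector parts); (ii) c·(A j Ā) + (A j Ā)·c = 0 and c·(A k Ā) + (A k Ā)·c = 0 (orthogonality of the vector parts of c to those of A j Ā and A k Ā); (iii) there exists μ ∈ ℝ[t] such that c = μ·(A i Ā). -/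
open Polynomial

noncomputable section

/-- The quaternion unit `i`. -/
def qi : Quaternion ℝ := ⟨0, 1, 0, 0⟩
/-- The quaternion unit `j`. -/
def qj : Quaternion ℝ := ⟨0, 0, 1, 0⟩
/-- The quaternion unit `k`. -/
def qk : Quaternion ℝ := ⟨0, 0, 0, 1⟩

/-- Embedding of real polynomials into quaternion polynomials (scalar coefficients). -/
def toQ : Polynomial ℝ →+* Polynomial (Quaternion ℝ) :=
  mapRingHom (algebraMap ℝ (Quaternion ℝ))

/-- Coefficientwise quaternion conjugation of a quaternion polynomial. -/
def pconj (p : Polynomial (Quaternion ℝ)) : Polynomial (Quaternion ℝ) :=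
  p.sum fun n a => monomial n (star a)

/-- `A ∈ ℍ[t]` is *reduced with respect to `i`* if it has no real polynomial factor of
positive degree and no right factor of positive degree all of whose coefficients lie in the
subalgebra of `ℍ` generated by `1` and `i`. -/
def ReducedWrtI (A : Polynomial (Quaternion ℝ)) : Prop :=
  (∀ ψ : Polynomial ℝ, ∀ A' : Polynomial (Quaternion ℝ), A = toQ ψ * A' → ψ.natDegree = 0) ∧
  (∀ A' R : Polynomial (Quaternion ℝ), A = A' * R →
    (∀ n, (R.coeff n).imJ = 0 ∧ (R.coeff n).imK = 0) → R.natDegree = 0)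

open scoped Quaternion ComplexConjugate

/-!
Conjugation by `A` reduces everything to `D = Ā c A`, which is vectorial because `c` is.
Since `Ā A = A Ā = N` is a nonzero real polynomial, hence central,
`Ā (c (A u Ā) ∓ (A u Ā) c) A = N (D u ∓ u D)`. A vectorial quaternion commutes with `i` iff it
anticommutes with `j` and `k` (both mean: no `j`- and `k`-components), which gives (i) ⇔ (ii).

Under (i), `D = δ i` with `δ` real, so `N² c = A D Ā = δ (A i Ā)`, and it remains to see that
`A i Ā` has no real factor of positive degree. Write `A = P₁ + P₂ j` with `P₁, P₂ ∈ ℂ[t]`; then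
`A i Ā = i (P₁ P̄₁ - P₂ P̄₂) - 2 i P₁ P₂ j`. At a complex root `z` of a real factor both
components vanish at `z` and `z̄`, which forces `P₁(w) = P₂(w̄) = 0` for some `w ∈ {z, z̄}`:
then `t - w` is a right factor of `A` with complex coefficients, contradicting reducedness.
-/

lemma coeff_sum_monomial {R S : Type*} [Semiring R] [Semiring S] (g : R → S) (hg : g 0 = 0)
    (p : R[X]) (m : ℕ) : (p.sum fun n a => monomial n (g a)).coeff m = g (p.coeff m) := by
  simp only [Polynomial.sum_def, finsetSum_coeff, coeff_monomial, Finset.sum_ite_eq']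
  split_ifs with h
  · rfl
  · rw [notMem_support_iff.mp h, hg]

lemma coeff_pconj (p : ℍ[ℝ][X]) (n : ℕ) : (pconj p).coeff n = star (p.coeff n) :=
  coeff_sum_monomial _ (star_zero _) p n

lemma coeff_toQ (ψ : ℝ[X]) (n : ℕ) : (toQ ψ).coeff n = ψ.coeff n := coeff_map _ n

lemma pconj_sub (p q : ℍ[ℝ][X]) : pconj (p - q) = pconj p - pconj q := by
  ext n : 1; simp [coeff_pconj]

lemma pconj_pconj (p : ℍ[ℝ][X]) : pconj (pconj p) = p := by
  ext n : 1; simp [coeff_pconj]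

lemma pconj_mul (p q : ℍ[ℝ][X]) : pconj (p * q) = pconj q * pconj p := by
  ext n : 1
  rw [coeff_pconj, coeff_mul, coeff_mul, star_sum,
    ← Finset.Nat.sum_antidiagonal_swap]
  simp [coeff_pconj]

lemma pconj_toQ (ψ : ℝ[X]) : pconj (toQ ψ) = toQ ψ := by
  ext n : 1; simp [coeff_pconj, coeff_toQ]

lemma pconj_derivative (p : ℍ[ℝ][X]) : pconj (derivative p) = derivative (pconj p) := by
  ext n : 1
  simp only [coeff_pconj, coeff_derivative, star_mul, star_add, star_natCast, star_one]
  rw [← Nat.cast_succ, Nat.cast_comm]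

lemma toQ_injective : Function.Injective toQ :=
  map_injective _ (algebraMap ℝ ℍ[ℝ]).injective

lemma toQ_commute (ψ : ℝ[X]) (p : ℍ[ℝ][X]) : Commute (toQ ψ) p := by
  ext n : 1
  rw [coeff_mul, coeff_mul, ← Finset.Nat.sum_antidiagonal_swap]
  simp [coeff_toQ, Quaternion.coe_commutes]

lemma toQ_ne_zero {ψ : ℝ[X]} (hψ : ψ ≠ 0) : toQ ψ ≠ 0 :=
  (map_ne_zero_iff _ toQ_injective).mpr hψ

def rePoly (p : ℍ[ℝ][X]) : ℝ[X] := p.sum fun n a => monomial n a.re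

def imIPoly (p : ℍ[ℝ][X]) : ℝ[X] := p.sum fun n a => monomial n a.imI

lemma toQ_rePoly {s : ℍ[ℝ][X]} (hs : pconj s = s) : toQ (rePoly s) = s := by
  ext n : 1
  have h := congrArg (coeff · n) hs
  simp only [coeff_pconj, Quaternion.star_eq_self] at h
  rw [coeff_toQ, rePoly, coeff_sum_monomial _ rfl, ← h]

lemma pconj_zero : pconj 0 = 0 := by
  ext n : 1; simp [coeff_pconj]

lemma pconj_ne_zero {p : ℍ[ℝ][X]} (hp : p ≠ 0) : pconj p ≠ 0 := fun h =>
  hp (by rw [← pconj_pconj p, h, pconj_zero])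

def normPoly (A : ℍ[ℝ][X]) : ℝ[X] := rePoly (A * pconj A)

lemma toQ_normPoly (A : ℍ[ℝ][X]) : toQ (normPoly A) = A * pconj A :=
  toQ_rePoly (by rw [pconj_mul, pconj_pconj])

lemma normPoly_ne_zero {A : ℍ[ℝ][X]} (hA : A ≠ 0) : normPoly A ≠ 0 := fun h => by
  simpa [h, hA, pconj_ne_zero hA] using toQ_normPoly A

lemma pconj_mul_self {A : ℍ[ℝ][X]} (hA : A ≠ 0) : pconj A * A = toQ (normPoly A) :=
  mul_left_cancel₀ hA <| by
    rw [← mul_assoc, ← toQ_normPoly, (toQ_commute _ _).eq]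

section Sandwich

variable {A : ℍ[ℝ][X]} (hA : A ≠ 0) (c : ℍ[ℝ][X]) (u : ℍ[ℝ])
include hA

lemma pconj_mul_mul_eq_zero_iff {x : ℍ[ℝ][X]} : pconj A * x * A = 0 ↔ x = 0 := by
  simp [hA, pconj_ne_zero hA]

lemma pconj_mul_mul_sandwich :
    pconj A * (c * (A * C u * pconj A)) * A = toQ (normPoly A) * (pconj A * c * A * C u) := by
  rw [(toQ_commute _ _).eq, ← pconj_mul_self hA]
  simp only [mul_assoc]

lemma pconj_mul_sandwich_mul :
    pconj A * ((A * C u * pconj A) * c) * A = toQ (normPoly A) * (C u * (pconj A * c * A)) := by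
  rw [← pconj_mul_self hA]
  simp only [mul_assoc]

lemma commute_sandwich_iff :
    c * (A * C u * pconj A) = (A * C u * pconj A) * c ↔
      pconj A * c * A * C u = C u * (pconj A * c * A) := by
  rw [← sub_eq_zero, ← pconj_mul_mul_eq_zero_iff hA, mul_sub, sub_mul,
    pconj_mul_mul_sandwich hA, pconj_mul_sandwich_mul hA, ← mul_sub,
    mul_eq_zero_iff_left (toQ_ne_zero (normPoly_ne_zero hA)), sub_eq_zero]

lemma anticommute_sandwich_iff :
    c * (A * C u * pconj A) + (A * C u * pconj A) * c = 0 ↔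
      pconj A * c * A * C u + C u * (pconj A * c * A) = 0 := by
  rw [← pconj_mul_mul_eq_zero_iff hA, mul_add, add_mul,
    pconj_mul_mul_sandwich hA, pconj_mul_sandwich_mul hA, ← mul_add,
    mul_eq_zero_iff_left (toQ_ne_zero (normPoly_ne_zero hA))]

end Sandwich

@[simp] lemma qi_re : qi.re = 0 := rfl
@[simp] lemma qi_imI : qi.imI = 1 := rfl
@[simp] lemma qi_imJ : qi.imJ = 0 := rfl
@[simp] lemma qi_imK : qi.imK = 0 := rfl
@[simp] lemma qj_re : qj.re = 0 := rfl
@[simp] lemma qj_imI : qj.imI = 0 := rfl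
@[simp] lemma qj_imJ : qj.imJ = 1 := rfl
@[simp] lemma qj_imK : qj.imK = 0 := rfl
@[simp] lemma qk_re : qk.re = 0 := rfl
@[simp] lemma qk_imI : qk.imI = 0 := rfl
@[simp] lemma qk_imJ : qk.imJ = 0 := rfl
@[simp] lemma qk_imK : qk.imK = 1 := rfl

namespace Quaternion

lemma commute_qi_iff (d : ℍ[ℝ]) : d * qi = qi * d ↔ d.imJ = 0 ∧ d.imK = 0 := by
  simp [Quaternion.ext_iff, re_mul, imI_mul, imJ_mul, imK_mul]
  constructor <;> rintro ⟨h₁, h₂⟩ <;> constructor <;> linarith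

lemma anticommute_qj_iff {d : ℍ[ℝ]} (hd : d.re = 0) : d * qj + qj * d = 0 ↔ d.imJ = 0 := by
  simp [Quaternion.ext_iff, re_mul, imI_mul, imJ_mul, imK_mul, hd]

lemma anticommute_qk_iff {d : ℍ[ℝ]} (hd : d.re = 0) : d * qk + qk * d = 0 ↔ d.imK = 0 := by
  simp [Quaternion.ext_iff, re_mul, imI_mul, imJ_mul, imK_mul, hd]

end Quaternion

section Vectorial

variable {D : ℍ[ℝ][X]} (hD : pconj D = -D)
include hD

lemma re_coeff_eq_zero_of_pconj_eq_neg (n : ℕ) : (D.coeff n).re = 0 := by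
  simpa [coeff_pconj, Quaternion.star_eq_neg] using congrArg (coeff · n) hD

lemma commute_C_qi_iff_anticommute_C_qj_C_qk :
    D * C qi = C qi * D ↔ D * C qj + C qj * D = 0 ∧ D * C qk + C qk * D = 0 := by
  simp only [Polynomial.ext_iff, coeff_add, coeff_mul_C, coeff_C_mul, coeff_zero,
    Quaternion.commute_qi_iff, forall_and,
    Quaternion.anticommute_qj_iff (re_coeff_eq_zero_of_pconj_eq_neg hD _),
    Quaternion.anticommute_qk_iff (re_coeff_eq_zero_of_pconj_eq_neg hD _)]

lemma exists_eq_toQ_mul_C_qi (h : D * C qi = C qi * D) : ∃ δ : ℝ[X], D = toQ δ * C qi := by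
  refine ⟨imIPoly D, ?_⟩
  ext n : 1
  have hn := (Quaternion.commute_qi_iff _).mp (by simpa using congrArg (coeff · n) h)
  have hre := re_coeff_eq_zero_of_pconj_eq_neg hD n
  rw [coeff_mul_C, coeff_toQ, imIPoly, coeff_sum_monomial _ rfl]
  ext <;> simp [hn, hre]

end Vectorial

lemma toQ_normPoly_mul_self_mul (A c : ℍ[ℝ][X]) :
    toQ (normPoly A * normPoly A) * c = A * (pconj A * c * A) * pconj A := by
  calc toQ (normPoly A * normPoly A) * c = toQ (normPoly A) * c * toQ (normPoly A) := by
        rw [map_mul, mul_assoc, mul_assoc, (toQ_commute _ c).eq]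
    _ = A * (pconj A * c * A) * pconj A := by
        rw [toQ_normPoly]; simp only [mul_assoc]

def RealPrimitive (F : ℍ[ℝ][X]) : Prop :=
  ∀ (ψ : ℝ[X]) (G : ℍ[ℝ][X]), F = toQ ψ * G → ψ.natDegree = 0

lemma toQ_mul_left_comm (φ ψ : ℝ[X]) (p : ℍ[ℝ][X]) :
    toQ φ * (toQ ψ * p) = toQ ψ * (toQ φ * p) := by
  rw [← mul_assoc, ← mul_assoc, ← map_mul, ← map_mul, mul_comm]

lemma RealPrimitive.exists_eq_toQ_mul {F c : ℍ[ℝ][X]} (hF : RealPrimitive F) {n δ : ℝ[X]}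
    (hn : n ≠ 0) (h : toQ n * c = toQ δ * F) : ∃ μ : ℝ[X], c = toQ μ * F := by
  set γ := gcd δ n
  have hγ : γ ≠ 0 := fun h0 => hn ((gcd_eq_zero_iff _ _).mp h0).2
  obtain ⟨a, b, hab⟩ := isCoprime_div_gcd_div_gcd (p := δ) hn
  set d := δ / γ
  set m := n / γ
  have hd : γ * d = δ := EuclideanDomain.mul_div_cancel' hγ (gcd_dvd_left _ _)
  have hm : γ * m = n := EuclideanDomain.mul_div_cancel' hγ (gcd_dvd_right _ _)
  clear_value γ d m
  have hmd : toQ m * c = toQ d * F := by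
    refine mul_left_cancel₀ (toQ_ne_zero hγ) ?_
    rw [← mul_assoc, ← mul_assoc, ← map_mul, ← map_mul, hd, hm, h]
  -- `F = (a d + b m) F` and `d F = m c`
  have hFm : F = toQ m * (toQ a * c + toQ b * F) := by
    rw [mul_add, toQ_mul_left_comm, hmd, toQ_mul_left_comm, ← mul_assoc, ← mul_assoc,
      ← add_mul, ← map_mul, ← map_mul, ← map_add, mul_comm d, mul_comm m, hab, map_one,
      one_mul]
  have hm0 : m ≠ 0 := fun h0 => hn (by rw [← hm, h0, mul_zero])
  obtain ⟨u, rfl⟩ : ∃ u, m = C u := ⟨_, eq_C_of_natDegree_eq_zero (hF _ _ hFm)⟩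
  have hu : u ≠ 0 := by rintro rfl; exact hm0 C_0
  refine ⟨C u⁻¹ * d, ?_⟩
  rw [map_mul, mul_assoc, ← hmd, ← mul_assoc, ← map_mul, ← C_mul, inv_mul_cancel₀ hu, C_1,
    map_one, one_mul]

def toQC : ℂ[X] →+* ℍ[ℝ][X] := mapRingHom Quaternion.ofComplex.toRingHom

lemma coeff_toQC (P : ℂ[X]) (n : ℕ) : (toQC P).coeff n = (P.coeff n : ℍ[ℝ]) := coeff_map _ n

-- The decomposition `ℍ = ℂ ⊕ ℂ j`: `a = cFst a + cSnd a * j`.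
@[simps]
def cFst : ℍ[ℝ] →+ ℂ where
  toFun a := ⟨a.re, a.imI⟩
  map_zero' := rfl
  map_add' _ _ := rfl

@[simps]
def cSnd : ℍ[ℝ] →+ ℂ where
  toFun a := ⟨a.imJ, a.imK⟩
  map_zero' := rfl
  map_add' _ _ := rfl

lemma cFst_mul (a b : ℍ[ℝ]) : cFst (a * b) = cFst a * cFst b - cSnd a * conj (cSnd b) := by
  apply Complex.ext <;> simp [Quaternion.re_mul, Quaternion.imI_mul] <;> ring

lemma cSnd_mul (a b : ℍ[ℝ]) : cSnd (a * b) = cFst a * cSnd b + cSnd a * conj (cFst b) := by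
  apply Complex.ext <;> simp [Quaternion.imJ_mul, Quaternion.imK_mul] <;> ring

lemma coeComplex_conj_mul_qj (z : ℂ) : ((conj z : ℂ) : ℍ[ℝ]) * qj = qj * z := by
  ext <;> simp [Quaternion.re_mul, Quaternion.imI_mul, Quaternion.imJ_mul, Quaternion.imK_mul]

def cFstPoly (p : ℍ[ℝ][X]) : ℂ[X] := p.sum fun n a => monomial n (cFst a)

def cSndPoly (p : ℍ[ℝ][X]) : ℂ[X] := p.sum fun n a => monomial n (cSnd a)

lemma coeff_cFstPoly (p : ℍ[ℝ][X]) (n : ℕ) : (cFstPoly p).coeff n = cFst (p.coeff n) :=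
  coeff_sum_monomial _ (map_zero _) p n

lemma coeff_cSndPoly (p : ℍ[ℝ][X]) (n : ℕ) : (cSndPoly p).coeff n = cSnd (p.coeff n) :=
  coeff_sum_monomial _ (map_zero _) p n

lemma toQC_cFstPoly_add_toQC_cSndPoly_mul (p : ℍ[ℝ][X]) :
    toQC (cFstPoly p) + toQC (cSndPoly p) * C qj = p := by
  ext n : 1
  simp only [coeff_add, coeff_mul_C, coeff_toQC, coeff_cFstPoly, coeff_cSndPoly]
  ext <;> simp [Quaternion.re_mul, Quaternion.imI_mul, Quaternion.imJ_mul,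
    Quaternion.imK_mul]

lemma toQC_map_conj_mul_C_qj (P : ℂ[X]) :
    toQC (P.map (starRingEnd ℂ)) * C qj = C qj * toQC P := by
  ext n : 1
  simp only [coeff_mul_C, coeff_C_mul, coeff_toQC, coeff_map]
  exact coeComplex_conj_mul_qj _

lemma cFstPoly_mul (p q : ℍ[ℝ][X]) :
    cFstPoly (p * q) =
      cFstPoly p * cFstPoly q - cSndPoly p * (cSndPoly q).map (starRingEnd ℂ) := by
  ext n : 1
  simp only [coeff_cFstPoly, coeff_sub, coeff_mul, map_sum, cFst_mul, Finset.sum_sub_distrib,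
    coeff_cSndPoly, coeff_map]

lemma cSndPoly_mul (p q : ℍ[ℝ][X]) :
    cSndPoly (p * q) =
      cFstPoly p * cSndPoly q + cSndPoly p * (cFstPoly q).map (starRingEnd ℂ) := by
  ext n : 1
  simp only [coeff_cSndPoly, coeff_add, coeff_mul, map_sum, cSnd_mul, Finset.sum_add_distrib,
    coeff_cFstPoly, coeff_map]

lemma cFstPoly_pconj (p : ℍ[ℝ][X]) :
    cFstPoly (pconj p) = (cFstPoly p).map (starRingEnd ℂ) := by
  ext n : 1
  apply Complex.ext <;> simp [coeff_cFstPoly, coeff_pconj]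

lemma cSndPoly_pconj (p : ℍ[ℝ][X]) : cSndPoly (pconj p) = -cSndPoly p := by
  ext n : 1
  apply Complex.ext <;> simp [coeff_cSndPoly, coeff_pconj]

lemma cFstPoly_C (a : ℍ[ℝ]) : cFstPoly (C a) = C (cFst a) := by
  ext n : 1
  rw [coeff_cFstPoly, coeff_C, coeff_C]
  split_ifs <;> simp

lemma cSndPoly_C (a : ℍ[ℝ]) : cSndPoly (C a) = C (cSnd a) := by
  ext n : 1
  rw [coeff_cSndPoly, coeff_C, coeff_C]
  split_ifs <;> simp

lemma cFstPoly_toQ (ψ : ℝ[X]) : cFstPoly (toQ ψ) = ψ.map (algebraMap ℝ ℂ) := by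
  ext n : 1
  apply Complex.ext <;> simp [coeff_cFstPoly, coeff_toQ]

lemma cSndPoly_toQ (ψ : ℝ[X]) : cSndPoly (toQ ψ) = 0 := by
  ext n : 1
  apply Complex.ext <;> simp [coeff_cSndPoly, coeff_toQ]

lemma cFst_qi : cFst qi = Complex.I := by apply Complex.ext <;> simp

lemma cSnd_qi : cSnd qi = 0 := by apply Complex.ext <;> simp

lemma cFstPoly_sandwich_qi (A : ℍ[ℝ][X]) :
    cFstPoly (A * C qi * pconj A) = C Complex.I * (cFstPoly A * (cFstPoly A).map (starRingEnd ℂ)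
      - cSndPoly A * (cSndPoly A).map (starRingEnd ℂ)) := by
  simp only [cFstPoly_mul, cSndPoly_mul, cFstPoly_pconj, cSndPoly_pconj, cFstPoly_C, cSndPoly_C,
    cFst_qi, cSnd_qi, Polynomial.map_neg, Polynomial.map_zero, Polynomial.map_C, Complex.conj_I,
    map_zero, C_neg]
  ring

lemma cSndPoly_sandwich_qi (A : ℍ[ℝ][X]) :
    cSndPoly (A * C qi * pconj A) = -(2 * C Complex.I * (cFstPoly A * cSndPoly A)) := by
  simp only [cFstPoly_mul, cSndPoly_mul, cFstPoly_pconj, cSndPoly_pconj, cFstPoly_C, cSndPoly_C,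
    cFst_qi, cSnd_qi, Polynomial.map_zero, Polynomial.map_map, Polynomial.map_C, Complex.conj_I,
    map_zero, C_neg]
  rw [show (starRingEnd ℂ).comp (starRingEnd ℂ) = RingHom.id ℂ by ext; simp,
    Polynomial.map_id]
  ring

lemma eval_map_conj (P : ℂ[X]) (z : ℂ) :
    (P.map (starRingEnd ℂ)).eval z = conj (P.eval (conj z)) := by
  simp [eval_eq_sum_range]

lemma Complex.eq_zero_or_eq_zero_of_mul_conj_eq {a b c d : ℂ} (hac : a * c = 0)
    (hbd : b * d = 0) (h : a * conj b = c * conj d) : a = 0 ∧ d = 0 ∨ b = 0 ∧ c = 0 := by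
  rcases mul_eq_zero.mp hac with rfl | rfl <;> rcases mul_eq_zero.mp hbd with rfl | rfl <;>
    simp_all [or_comm]

lemma exists_eq_mul_toQC_X_sub_C {A : ℍ[ℝ][X]} {w : ℂ} (h₁ : (cFstPoly A).IsRoot w)
    (h₂ : (cSndPoly A).IsRoot (conj w)) : ∃ A', A = A' * toQC (X - C w) := by
  obtain ⟨Q₁, hQ₁⟩ := dvd_iff_isRoot.mpr h₁
  obtain ⟨Q₂, hQ₂⟩ := dvd_iff_isRoot.mpr h₂
  refine ⟨toQC Q₁ + toQC Q₂ * C qj, ?_⟩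
  rw [show X - C (conj w) = (X - C w).map (starRingEnd ℂ) by simp, mul_comm] at hQ₂
  rw [mul_comm] at hQ₁
  rw [← toQC_cFstPoly_add_toQC_cSndPoly_mul A, hQ₁, hQ₂, map_mul, map_mul, mul_assoc,
    toQC_map_conj_mul_C_qj, add_mul, mul_assoc]

lemma ReducedWrtI.ne_zero {A : ℍ[ℝ][X]} (hA : ReducedWrtI A) : A ≠ 0 := by
  rintro rfl
  simpa using hA.2 0 X (zero_mul X).symm (fun n => by rw [coeff_X]; split_ifs <;> simp)

lemma ReducedWrtI.realPrimitive_sandwich_qi {A : ℍ[ℝ][X]} (hred : ReducedWrtI A) :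
    RealPrimitive (A * C qi * pconj A) := by
  intro ψ G hG
  by_contra hψ
  obtain ⟨z, hz⟩ :=
    IsAlgClosed.exists_aeval_eq_zero ℂ ψ fun h => hψ (natDegree_eq_of_degree_eq_some h)
  have hz' : aeval (conj z) ψ = 0 := by rw [aeval_conj, hz, map_zero]
  have hvanish : ∀ y, aeval y ψ = 0 → (cFstPoly (A * C qi * pconj A)).eval y = 0 ∧
      (cSndPoly (A * C qi * pconj A)).eval y = 0 := by
    intro y hy
    simp [hG, cFstPoly_mul, cSndPoly_mul, cFstPoly_toQ, cSndPoly_toQ, eval_map_algebraMap, hy]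
  have hprod : ∀ y, aeval y ψ = 0 → (cFstPoly A).eval y * (cSndPoly A).eval y = 0 := by
    intro y hy
    simpa [cSndPoly_sandwich_qi, Complex.I_ne_zero] using (hvanish y hy).2
  have hnorm : (cFstPoly A).eval z * conj ((cFstPoly A).eval (conj z)) =
      (cSndPoly A).eval z * conj ((cSndPoly A).eval (conj z)) := by
    simpa [cFstPoly_sandwich_qi, eval_map_conj, sub_eq_zero, Complex.I_ne_zero]
      using (hvanish z hz).1
  obtain ⟨w, hw₁, hw₂⟩ : ∃ w, (cFstPoly A).IsRoot w ∧ (cSndPoly A).IsRoot (conj w) := by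
    rcases Complex.eq_zero_or_eq_zero_of_mul_conj_eq (hprod z hz) (hprod _ hz') hnorm with
      ⟨h₁, h₂⟩ | ⟨h₁, h₂⟩
    · exact ⟨z, h₁, h₂⟩
    · exact ⟨conj z, h₁, by rwa [Complex.conj_conj]⟩
  obtain ⟨A', hA'⟩ := exists_eq_mul_toQC_X_sub_C hw₁ hw₂
  have := hred.2 A' _ hA' fun n => by simp [coeff_toQC]
  simp [toQC] at this

lemma pconj_toQ_mul_derivative_sub (α : ℝ[X]) {b : ℍ[ℝ][X]} (hb : pconj b = -b) :
    pconj (toQ α * derivative b - toQ (derivative α) * b) =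
      -(toQ α * derivative b - toQ (derivative α) * b) := by
  rw [pconj_sub, pconj_mul, pconj_mul, pconj_toQ, pconj_toQ, pconj_derivative, hb,
    derivative_neg, ← (toQ_commute _ _).eq, ← (toQ_commute _ _).eq]
  noncomm_ring

lemma pconj_pconj_mul_mul {c : ℍ[ℝ][X]} (hc : pconj c = -c) (A : ℍ[ℝ][X]) :
    pconj (pconj A * c * A) = -(pconj A * c * A) := by
  rw [pconj_mul, pconj_mul, pconj_pconj, hc]
  noncomm_ring

theorem framing_conditions_equivalent_general (α : Polynomial ℝ)
    (b A : Polynomial (Quaternion ℝ)) (hb : b + pconj b = 0)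
    (hred : ReducedWrtI A) :
    ((toQ α * derivative b - toQ (derivative α) * b) * (A * Polynomial.C qi * pconj A)
        = (A * Polynomial.C qi * pconj A) * (toQ α * derivative b - toQ (derivative α) * b) ↔
      ((toQ α * derivative b - toQ (derivative α) * b) * (A * Polynomial.C qj * pconj A)
          + (A * Polynomial.C qj * pconj A) * (toQ α * derivative b - toQ (derivative α) * b) = 0 ∧
       (toQ α * derivative b - toQ (derivative α) * b) * (A * Polynomial.C qk * pconj A)
          + (A * Polynomial.C qk * pconj A) * (toQ α * derivative b - toQ (derivative α) * b) = 0)) ∧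
    ((toQ α * derivative b - toQ (derivative α) * b) * (A * Polynomial.C qi * pconj A)
        = (A * Polynomial.C qi * pconj A) * (toQ α * derivative b - toQ (derivative α) * b) ↔
      ∃ μ : Polynomial ℝ,
        toQ α * derivative b - toQ (derivative α) * b = toQ μ * (A * Polynomial.C qi * pconj A)) := by
  have hA := hred.ne_zero
  have hc := pconj_toQ_mul_derivative_sub α (eq_neg_of_add_eq_zero_right hb)
  set c := toQ α * derivative b - toQ (derivative α) * b
  have hD := pconj_pconj_mul_mul hc A
  rw [commute_sandwich_iff hA, anticommute_sandwich_iff hA, anticommute_sandwich_iff hA]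
  refine ⟨commute_C_qi_iff_anticommute_C_qj_C_qk hD, fun h => ?_, fun ⟨μ, hμ⟩ => ?_⟩
  · obtain ⟨δ, hδ⟩ := exists_eq_toQ_mul_C_qi hD h
    have hN := normPoly_ne_zero hA
    refine hred.realPrimitive_sandwich_qi.exists_eq_toQ_mul (δ := δ) (mul_ne_zero hN hN) ?_
    rw [toQ_normPoly_mul_self_mul, hδ, ← mul_assoc A, ← (toQ_commute _ A).eq]
    simp only [mul_assoc]
  · rw [← commute_sandwich_iff hA, hμ, ← mul_assoc (A * C qi * pconj A),
      ← (toQ_commute μ _).eq]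

/-- For nonzero `α ∈ ℝ[t]`, vectorial `b ∈ ℍ[t]` and nonzero `A ∈ ℍ[t]`
reduced with respect to `i`, setting `c = α·b′ − α′·b`, the following are equivalent:
(i) `c` commutes with `A i Ā` (vanishing cross product of vector parts);
(ii) `c·(A j Ā) + (A j Ā)·c = 0` and `c·(A k Ā) + (A k Ā)·c = 0` (orthogonality);
(iii) there exists `μ ∈ ℝ[t]` with `c = μ·(A i Ā)`. -/
theorem framing_conditions_equivalent (α : Polynomial ℝ) (hα : α ≠ 0)
    (b A : Polynomial (Quaternion ℝ)) (hb : b + pconj b = 0)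
    (hA : A ≠ 0) (hred : ReducedWrtI A) :
    ((toQ α * derivative b - toQ (derivative α) * b) * (A * Polynomial.C qi * pconj A)
        = (A * Polynomial.C qi * pconj A) * (toQ α * derivative b - toQ (derivative α) * b) ↔
      ((toQ α * derivative b - toQ (derivative α) * b) * (A * Polynomial.C qj * pconj A)
          + (A * Polynomial.C qj * pconj A) * (toQ α * derivative b - toQ (derivative α) * b) = 0 ∧
       (toQ α * derivative b - toQ (derivative α) * b) * (A * Polynomial.C qk * pconj A)
          + (A * Polynomial.C qk * pconj A) * (toQ α * derivative b - toQ (derivative α) * b) = 0)) ∧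
    ((toQ α * derivative b - toQ (derivative α) * b) * (A * Polynomial.C qi * pconj A)
        = (A * Polynomial.C qi * pconj A) * (toQ α * derivative b - toQ (derivative α) * b) ↔
      ∃ μ : Polynomial ℝ,
        toQ α * derivative b - toQ (derivative α) * b = toQ μ * (A * Polynomial.C qi * pconj A)) :=
  framing_conditions_equivalent_general α b A hb hred
end
end

section
/- Let α ∈ ℝ[t] be nonzero, let A ∈ ℍ[t] be nonzero and reduced with respect to i, and write A i Ā = F₁·i + F₂·j + F₃·k with F₁, F₂, F₃ ∈ ℝ[t]. Let z ∈ ℂ be a root of α (viewed in ℂ[t]) of multiplicity exactly 1. Then the following are equivalent: (a) there exist μ ∈ ℂ[t] and b₁, b₂, b₃ ∈ ℂ[t], not all divisible by (X − z), such that α·b_m′ − α′·b_m = μ·F_m for m = 1, 2, 3 (all polynomials viewed in ℂ[t]); (b) the two vectors (F₁(z), F₂(z), F₃(z)) and (F₁′(z), F₂′(z), F₃′(z)) of ℂ³ are linearly dependent over ℂ. -/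
open Polynomial

noncomputable section

/-- Embedding of real polynomials into complex polynomials. -/
def toC : Polynomial ℝ →+* Polynomial ℂ :=
  mapRingHom (algebraMap ℝ ℂ)

/-!
Evaluating `α b′ − α′ b = μ F` and its derivative at the simple root `z` gives
`−α′(z) b(z) = μ(z) F(z)` and `−α″(z) b(z) = μ′(z) F(z) + μ(z) F′(z)`; as `b(z) ≠ 0` forces
`μ(z) ≠ 0`, `F′(z)` is a multiple of `F(z)`. Conversely, if `F′(z) = c F(z)` and
`α = (t − z) β`, then `b = β F + α Q` with `Q′ = (c F − F′) / (t − z)` solves the equation for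
`μ = α β′ − α′ β + c α β`, and `b(z) = β(z) F(z)`.

Passing between linear dependence and `F′(z) = c F(z)`, and getting `b(z) ≠ 0` in the converse,
need `F(z) ≠ 0`, i.e. that `F₁, F₂, F₃` have no common complex root; this is where reducedness
enters. In the representation of `ℍ ⊗ ℂ` by complex `2 × 2` matrices, `Ā` evaluates to the
adjugate of `A(z)`, so a common root gives `A(z) diag(i, −i) adj A(z) = 0`. That forces a zero
column in `A(z)`, and a zero column yields a right factor `t − v` of `A` with `v ∈ ℂ ⊂ ℍ`.
-/

open Matrix Quaternion ComplexConjugate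

namespace Polynomial

theorem exists_eq_mul_X_sub_C_add_C {R : Type*} [Ring R] (p : R[X]) (c : R) :
    ∃ q r, p = q * (X - C c) + C r := by
  induction p using Polynomial.induction_on' with
  | add p q hp hq =>
    obtain ⟨q₁, r₁, rfl⟩ := hp
    obtain ⟨q₂, r₂, rfl⟩ := hq
    exact ⟨q₁ + q₂, r₁ + r₂, by rw [C_add]; noncomm_ring⟩
  | monomial n a =>
    have hgeom := (commute_X (C c)).geom_sum₂_mul n
    refine ⟨C a * ∑ i ∈ Finset.range n, X ^ i * C c ^ (n - 1 - i), a * c ^ n, ?_⟩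
    rw [← C_mul_X_pow_eq_monomial, mul_assoc, hgeom, C_mul, C_pow]
    noncomm_ring

theorem derivative_wronskian {R : Type*} [CommRing R] (a b : R[X]) :
    derivative (wronskian a b) = a * derivative (derivative b) - derivative (derivative a) * b := by
  simp only [wronskian, derivative_sub, derivative_mul]
  ring

theorem exists_eq_X_sub_C_mul_of_rootMultiplicity_eq_one {R : Type*} [CommRing R]
    {p : R[X]} {z : R} (h : rootMultiplicity z p = 1) :
    ∃ β, p = (X - C z) * β ∧ β.eval z ≠ 0 := by
  have hp : p ≠ 0 := by rintro rfl; simp at h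
  obtain ⟨β, hβ, hβz⟩ := exists_eq_pow_rootMultiplicity_mul_and_not_dvd p hp z
  rw [h, pow_one] at hβ
  exact ⟨β, hβ, fun h => hβz (dvd_iff_isRoot.mpr h)⟩

theorem exists_derivative_eq {K : Type*} [Field K] [CharZero K] (p : K[X]) :
    ∃ q : K[X], derivative q = p := by
  induction p using Polynomial.induction_on' with
  | add p q hp hq =>
    obtain ⟨a, rfl⟩ := hp
    obtain ⟨b, rfl⟩ := hq
    exact ⟨a + b, derivative_add⟩
  | monomial n a =>
    refine ⟨C (a / (n + 1)) * X ^ (n + 1), ?_⟩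
    rw [derivative_C_mul_X_pow, ← C_mul_X_pow_eq_monomial, Nat.add_sub_cancel]
    push_cast
    field_simp

section Wronskian

variable {K ι : Type*} [Field K] {α β μ : K[X]} {z : K}

theorem exists_eval_derivative_eq_mul_of_wronskian_eq (hβ : α = (X - C z) * β)
    (hβz : β.eval z ≠ 0) {b F : ι → K[X]} (hb : ∃ m, (b m).eval z ≠ 0)
    (h : ∀ m, wronskian α (b m) = μ * F m) :
    ∃ c : K, ∀ m, (derivative (F m)).eval z = c * (F m).eval z := by
  have hα : α.eval z = 0 := by simp [hβ]
  have hα' : (derivative α).eval z = β.eval z := by simp [hβ, derivative_mul]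
  have hval m : -(β.eval z * (b m).eval z) = μ.eval z * (F m).eval z := by
    simpa [wronskian, hα, hα'] using congrArg (eval z) (h m)
  have hder m : -((derivative (derivative α)).eval z * (b m).eval z)
      = (derivative μ).eval z * (F m).eval z + μ.eval z * (derivative (F m)).eval z := by
    simpa [derivative_wronskian, derivative_mul, hα] using congrArg (eval z ∘ derivative) (h m)
  have hμz : μ.eval z ≠ 0 := by
    obtain ⟨m, hm⟩ := hb
    intro hμ
    simpa [hμ, hβz, hm] using hval m
  refine ⟨(derivative (derivative α)).eval z / β.eval z - (derivative μ).eval z / μ.eval z,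
    fun m => ?_⟩
  rw [div_sub_div _ _ hβz hμz, div_mul_eq_mul_div, eq_div_iff (mul_ne_zero hβz hμz)]
  linear_combination -β.eval z * hder m + (derivative (derivative α)).eval z * hval m

theorem exists_wronskian_eq_mul_of_eval_derivative_eq [CharZero K] (hβ : α = (X - C z) * β)
    {F : K[X]} {c : K} (hc : (derivative F).eval z = c * F.eval z) :
    ∃ b : K[X], b.eval z = β.eval z * F.eval z ∧
      wronskian α b = (wronskian α β + C c * α * β) * F := by
  obtain ⟨h, hh⟩ : X - C z ∣ C c * F - derivative F := by
    rw [dvd_iff_isRoot]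
    simp [hc]
  obtain ⟨Q, hQ⟩ := exists_derivative_eq h
  refine ⟨β * F + α * Q, by simp [hβ], ?_⟩
  simp only [wronskian, derivative_add, derivative_mul, hQ]
  linear_combination (α * h) * hβ - (α * β) * hh

theorem exists_wronskian_eq_iff_not_linearIndependent [CharZero K] (hβ : α = (X - C z) * β)
    (hβz : β.eval z ≠ 0) {F : ι → K[X]} (hF : ∃ m, (F m).eval z ≠ 0) :
    (∃ (μ : K[X]) (b : ι → K[X]), (¬∀ m, X - C z ∣ b m) ∧ ∀ m, wronskian α (b m) = μ * F m) ↔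
      ¬LinearIndependent K ![fun m => (F m).eval z, fun m => (derivative (F m)).eval z] := by
  rw [LinearIndependent.pair_iff' (Function.ne_iff.2 hF)]
  simp only [not_forall, not_not, funext_iff, Pi.smul_apply, smul_eq_mul, eq_comm (a := _ * _),
    dvd_iff_isRoot, IsRoot.def]
  constructor
  · rintro ⟨μ, b, hb, h⟩
    exact exists_eval_derivative_eq_mul_of_wronskian_eq hβ hβz hb h
  · rintro ⟨c, hc⟩
    choose b hbz hb using fun m => exists_wronskian_eq_mul_of_eval_derivative_eq hβ (hc m)
    obtain ⟨m, hm⟩ := hF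
    exact ⟨_, b, ⟨m, by simp [hbz, hβz, hm]⟩, hb⟩

end Wronskian

end Polynomial

namespace Matrix

theorem exists_col_eq_zero_of_mul_mul_adjugate_eq_zero {R : Type*} [CommRing R] [NoZeroDivisors R]
    [NeZero (2 : R)] {d : R} (hd : d ≠ 0) {M : Matrix (Fin 2) (Fin 2) R}
    (h : M * !![d, 0; 0, -d] * adjugate M = 0) : ∃ j, ∀ i, M i j = 0 := by
  have e00 := congrFun (congrFun h 0) 0
  have e01 := congrFun (congrFun h 0) 1
  have e10 := congrFun (congrFun h 1) 0
  simp only [mul_apply, adjugate_fin_two, Fin.sum_univ_two, of_apply, cons_val', cons_val_zero,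
    cons_val_one, empty_val', cons_val_fin_one, zero_apply] at e00 e01 e10
  have hd2 : 2 * d ≠ 0 := mul_ne_zero two_ne_zero hd
  have hpq : M 0 0 * M 0 1 = 0 := by
    simpa [hd2] using (by linear_combination -e01 : (2 * d) * (M 0 0 * M 0 1) = 0)
  have hrs : M 1 0 * M 1 1 = 0 := by
    simpa [hd2] using (by linear_combination e10 : (2 * d) * (M 1 0 * M 1 1) = 0)
  have hdet : M 0 0 * M 1 1 + M 0 1 * M 1 0 = 0 := by
    simpa [hd] using (by linear_combination e00 : d * (M 0 0 * M 1 1 + M 0 1 * M 1 0) = 0)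
  simp only [Fin.exists_fin_two, Fin.forall_fin_two]
  grind [mul_eq_zero]

end Matrix

def quatMatrix : Quaternion ℝ →+* Matrix (Fin 2) (Fin 2) ℂ where
  toFun q := !![⟨q.re, q.imI⟩, ⟨q.imJ, q.imK⟩; ⟨-q.imJ, q.imK⟩, ⟨q.re, -q.imI⟩]
  map_one' := by ext i j; fin_cases i <;> fin_cases j <;> simp [Complex.ext_iff]
  map_mul' a b := by
    ext i j
    fin_cases i <;> fin_cases j <;> simp [mul_apply, Complex.ext_iff] <;> constructor <;> ring
  map_zero' := by ext i j; fin_cases i <;> fin_cases j <;> simp [Complex.ext_iff]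
  map_add' a b := by
    ext i j; fin_cases i <;> fin_cases j <;> simp [Complex.ext_iff, add_comm]

theorem quatMatrix_star (a : Quaternion ℝ) : quatMatrix (star a) = adjugate (quatMatrix a) := by
  ext i j; fin_cases i <;> fin_cases j <;> simp [quatMatrix, adjugate_fin_two, Complex.ext_iff]

theorem quatMatrix_coe (r : ℝ) : quatMatrix r = algebraMap ℂ _ (r : ℂ) := by
  ext i j; fin_cases i <;> fin_cases j <;> simp [quatMatrix, algebraMap_eq_diagonal, Complex.ext_iff]

theorem quatMatrix_qi : quatMatrix qi = !![Complex.I, 0; 0, -Complex.I] := by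
  ext i j; fin_cases i <;> fin_cases j <;> simp [quatMatrix, qi, Complex.ext_iff]

theorem eq_zero_of_quatMatrix_col_eq_zero {a : Quaternion ℝ} {j : Fin 2}
    (h : ∀ i, quatMatrix a i j = 0) : a = 0 := by
  have h0 := h 0
  have h1 := h 1
  fin_cases j <;> simp [quatMatrix, Complex.ext_iff] at h0 h1 <;> ext <;> simp [*]

theorem quatMatrix_coeComplex (v : ℂ) : quatMatrix v = !![v, 0; 0, conj v] := by
  ext i j; fin_cases i <;> fin_cases j <;> simp [quatMatrix, Complex.ext_iff]

theorem pconj_monomial (n : ℕ) (a : Quaternion ℝ) : pconj (monomial n a) = monomial n (star a) := by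
  simp [pconj]

theorem pconj_add (p q : Polynomial (Quaternion ℝ)) : pconj (p + q) = pconj p + pconj q := by
  simp only [pconj]
  rw [sum_add_index] <;> simp

def evalMatrix (z : ℂ) : Polynomial (Quaternion ℝ) →+* Matrix (Fin 2) (Fin 2) ℂ :=
  eval₂RingHom' quatMatrix (algebraMap ℂ _ z) fun a => (Algebra.commutes z (quatMatrix a)).symm

theorem evalMatrix_C (z : ℂ) (a : Quaternion ℝ) : evalMatrix z (C a) = quatMatrix a :=
  eval₂_C _ _

theorem evalMatrix_X (z : ℂ) : evalMatrix z X = algebraMap ℂ _ z :=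
  eval₂_X _ _

theorem evalMatrix_monomial (z : ℂ) (n : ℕ) (a : Quaternion ℝ) :
    evalMatrix z (monomial n a) = z ^ n • quatMatrix a := by
  rw [← C_mul_X_pow_eq_monomial, map_mul, map_pow, evalMatrix_C, evalMatrix_X, ← map_pow,
    ← Algebra.commutes, ← Algebra.smul_def]

theorem evalMatrix_pconj (z : ℂ) (p : Polynomial (Quaternion ℝ)) :
    evalMatrix z (pconj p) = adjugate (evalMatrix z p) := by
  induction p using Polynomial.induction_on' with
  | add p q hp hq =>
    rw [pconj_add, map_add, map_add, hp, hq]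
    ext i j; fin_cases i <;> fin_cases j <;> simp [adjugate_fin_two] <;> ring
  | monomial n a =>
    rw [pconj_monomial, evalMatrix_monomial, evalMatrix_monomial, quatMatrix_star, adjugate_smul]
    simp

theorem evalMatrix_toQ (z : ℂ) (F : Polynomial ℝ) :
    evalMatrix z (toQ F) = algebraMap ℂ _ ((toC F).eval z) := by
  induction F using Polynomial.induction_on' with
  | add p q hp hq => simp only [map_add, hp, hq, eval_add]
  | monomial n r =>
    simp only [toQ, toC, coe_mapRingHom, map_monomial, eval_monomial, evalMatrix_monomial,
      Quaternion.algebraMap_def, quatMatrix_coe, Complex.coe_algebraMap, Algebra.smul_def, map_mul,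
      map_pow]
    exact (Algebra.commutes _ _).symm

theorem exists_eq_mul_X_sub_C_of_evalMatrix_col_eq_zero {A : Polynomial (Quaternion ℝ)} {w : ℂ}
    {j : Fin 2} (h : ∀ i, evalMatrix w A i j = 0) :
    ∃ (B : Polynomial (Quaternion ℝ)) (v : ℂ), A = B * (X - C (v : ℍ)) := by
  obtain ⟨v, hv⟩ : ∃ v : ℂ, ∀ i, evalMatrix w (X - C (v : ℍ)) i j = 0 := by
    have hX (v : ℂ) : evalMatrix w (X - C (v : ℍ)) = !![w - v, 0; 0, w - conj v] := by
      ext i j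
      fin_cases i <;> fin_cases j <;>
        simp [evalMatrix_X, evalMatrix_C, quatMatrix_coeComplex, algebraMap_matrix_apply]
    fin_cases j
    exacts [⟨w, by simp [hX, Fin.forall_fin_two]⟩, ⟨conj w, by simp [hX, Fin.forall_fin_two]⟩]
  obtain ⟨B, r, rfl⟩ := exists_eq_mul_X_sub_C_add_C A (v : ℍ)
  have hr : r = 0 := eq_zero_of_quatMatrix_col_eq_zero fun i => by
    simpa only [map_add, map_mul, evalMatrix_C, Matrix.add_apply, mul_apply, Fin.sum_univ_two, hv,
      mul_zero, zero_add] using h i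
  exact ⟨B, v, by rw [hr, C_0, add_zero]⟩

theorem ReducedWrtI.exists_evalMatrix_ne_zero {A : Polynomial (Quaternion ℝ)} (hred : ReducedWrtI A)
    (w : ℂ) (j : Fin 2) : ∃ i, evalMatrix w A i j ≠ 0 := by
  by_contra! h
  obtain ⟨B, v, hA⟩ := exists_eq_mul_X_sub_C_of_evalMatrix_col_eq_zero h
  have := hred.2 B _ hA fun n => by
    rcases n with _ | _ | n <;> simp [coeff_X, coeff_C]
  simp at this

theorem ReducedWrtI.not_forall_eval_eq_zero {A : Polynomial (Quaternion ℝ)} (hred : ReducedWrtI A)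
    {F₁ F₂ F₃ : Polynomial ℝ}
    (hF : A * Polynomial.C qi * pconj A
      = toQ F₁ * Polynomial.C qi + toQ F₂ * Polynomial.C qj + toQ F₃ * Polynomial.C qk)
    (z : ℂ) : ¬((toC F₁).eval z = 0 ∧ (toC F₂).eval z = 0 ∧ (toC F₃).eval z = 0) := by
  rintro ⟨h₁, h₂, h₃⟩
  have hM : evalMatrix z A * !![Complex.I, 0; 0, -Complex.I] * adjugate (evalMatrix z A) = 0 := by
    simpa [← quatMatrix_qi, ← evalMatrix_pconj, evalMatrix_C, evalMatrix_toQ, h₁, h₂, h₃]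
      using congrArg (evalMatrix z) hF
  obtain ⟨j, hj⟩ := exists_col_eq_zero_of_mul_mul_adjugate_eq_zero Complex.I_ne_zero hM
  obtain ⟨i, hi⟩ := hred.exists_evalMatrix_ne_zero z j
  exact hi (hj i)

theorem rational_solution_iff_multiplicity_one_general (α : Polynomial ℝ)
    (A : Polynomial (Quaternion ℝ)) (hred : ReducedWrtI A)
    (F₁ F₂ F₃ : Polynomial ℝ)
    (hF : A * Polynomial.C qi * pconj A
      = toQ F₁ * Polynomial.C qi + toQ F₂ * Polynomial.C qj + toQ F₃ * Polynomial.C qk)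
    (z : ℂ) (hz : rootMultiplicity z (toC α) = 1) :
    (∃ μ b₁ b₂ b₃ : Polynomial ℂ,
      ¬((X - Polynomial.C z ∣ b₁) ∧ (X - Polynomial.C z ∣ b₂) ∧ (X - Polynomial.C z ∣ b₃)) ∧
      toC α * derivative b₁ - derivative (toC α) * b₁ = μ * toC F₁ ∧
      toC α * derivative b₂ - derivative (toC α) * b₂ = μ * toC F₂ ∧
      toC α * derivative b₃ - derivative (toC α) * b₃ = μ * toC F₃) ↔
    ¬LinearIndependent ℂ
      ![![(toC F₁).eval z, (toC F₂).eval z, (toC F₃).eval z],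
        ![(derivative (toC F₁)).eval z, (derivative (toC F₂)).eval z,
          (derivative (toC F₃)).eval z]] := by
  obtain ⟨β, hβ, hβz⟩ := exists_eq_X_sub_C_mul_of_rootMultiplicity_eq_one hz
  have hFz : ∃ m, (![toC F₁, toC F₂, toC F₃] m).eval z ≠ 0 := by
    by_contra! h
    exact hred.not_forall_eval_eq_zero hF z ⟨h 0, h 1, h 2⟩
  have hvec : ![fun m => (![toC F₁, toC F₂, toC F₃] m).eval z,
      fun m => (derivative (![toC F₁, toC F₂, toC F₃] m)).eval z] =
      ![![(toC F₁).eval z, (toC F₂).eval z, (toC F₃).eval z],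
        ![(derivative (toC F₁)).eval z, (derivative (toC F₂)).eval z,
          (derivative (toC F₃)).eval z]] := by
    ext i m; fin_cases i <;> fin_cases m <;> rfl
  rw [← hvec, ← exists_wronskian_eq_iff_not_linearIndependent hβ hβz hFz]
  simp [Fin.exists_fin_succ_pi, Fin.forall_fin_succ, wronskian]

/-- Let `z ∈ ℂ` be a root of `α` of multiplicity exactly `1` and write
`A i Ā = F₁·i + F₂·j + F₃·k`.  There exist `μ, b₁, b₂, b₃ ∈ ℂ[t]`, not all `b_m` divisible
by `X − z`, with `α·b_m′ − α′·b_m = μ·F_m` for `m = 1, 2, 3`, if and only if the vectors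
`(F₁(z), F₂(z), F₃(z))` and `(F₁′(z), F₂′(z), F₃′(z))` of `ℂ³` are linearly dependent. -/
theorem rational_solution_iff_multiplicity_one (α : Polynomial ℝ) (hα : α ≠ 0)
    (A : Polynomial (Quaternion ℝ)) (hA : A ≠ 0) (hred : ReducedWrtI A)
    (F₁ F₂ F₃ : Polynomial ℝ)
    (hF : A * Polynomial.C qi * pconj A
      = toQ F₁ * Polynomial.C qi + toQ F₂ * Polynomial.C qj + toQ F₃ * Polynomial.C qk)
    (z : ℂ) (hz : rootMultiplicity z (toC α) = 1) :
    (∃ μ b₁ b₂ b₃ : Polynomial ℂ,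
      ¬((X - Polynomial.C z ∣ b₁) ∧ (X - Polynomial.C z ∣ b₂) ∧ (X - Polynomial.C z ∣ b₃)) ∧
      toC α * derivative b₁ - derivative (toC α) * b₁ = μ * toC F₁ ∧
      toC α * derivative b₂ - derivative (toC α) * b₂ = μ * toC F₂ ∧
      toC α * derivative b₃ - derivative (toC α) * b₃ = μ * toC F₃) ↔
    ¬LinearIndependent ℂ
      ![![(toC F₁).eval z, (toC F₂).eval z, (toC F₃).eval z],
        ![(derivative (toC F₁)).eval z, (derivative (toC F₂)).eval z,
          (derivative (toC F₃)).eval z]] :=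
  rational_solution_iff_multiplicity_one_general α A hred F₁ F₂ F₃ hF z hz
end
end
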